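/- arXiv:1706.08027 — 2 statements merged into one kernel-verified Lean document; each statement's English description precedes it below -/
import Mathlib

section
/- A 2-element set {j, k} is a prickly 3-separator of a 2-polymatroid M if and only if it is a prickly 3-separator of the dual M*. -/
/-- The dual rank function `r*(Y) = Σ_{e ∈ Y} r({e}) + r(E \ Y) - r(E)`. -/
def dualRank {α : Type*} [DecidableEq α] (E : Finset α) (r : Finset α → ℤ)
    (Y : Finset α) : ℤ :=
  (∑ e ∈ Y, r {e}) + r (E \ Y) - r E

/-- `{j, k}` is a prickly 3-separator of the 2-polymatroid with ground set `E`
and rank function `r`. -/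
def Prickly {α : Type*} [DecidableEq α] (E : Finset α) (r : Finset α → ℤ)
    (j k : α) : Prop :=
  j ≠ k ∧ j ∈ E ∧ k ∈ E ∧
  r {j} = 2 ∧ r {k} = 2 ∧ r ({j, k} : Finset α) = 3 ∧
  r ({j, k} : Finset α) + r (E \ {j, k}) - r E = 2 ∧
  r ((E \ {j, k}) ∪ {j}) = r (E \ {j, k}) + 1 ∧
  r ((E \ {j, k}) ∪ {k}) = r (E \ {j, k}) + 1

/-!
Write `Z = {j, k}`. The connectivity function `λ(Y) = r Y + r (E \ Y) - r E` is self-dual, and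
`r* (E \ {k}) - r* (E \ Z) = r {j} + r {k} - r Z` (likewise with `j` and `k` swapped), while
`r* {j} = r {j} + r (E \ {j}) - r E` and `r* Z = r {j} + r {k} + r (E \ Z) - r E`.
So both conditions become linear conditions on the same handful of values of `r`. The forward
implication is then pure arithmetic; the backward one also needs `r (E \ {j}) ≤ r E` and
`r {j} ≤ 2` to pin `r {j}` down to `2`.
-/

open Finset

section sdiffPair

variable {α : Type*} [DecidableEq α] {E : Finset α} {j k : α}

lemma Finset.sdiff_pair_union_left (hjk : j ≠ k) (hj : j ∈ E) : E \ {j, k} ∪ {j} = E \ {k} := by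
  rw [sdiff_insert, union_comm, ← insert_eq, insert_erase (by simp [hj, hjk])]

lemma Finset.sdiff_pair_union_right (hjk : j ≠ k) (hk : k ∈ E) : E \ {j, k} ∪ {k} = E \ {j} := by
  rw [pair_comm, sdiff_pair_union_left hjk.symm hk]

end sdiffPair

namespace Prickly

variable {α : Type*} [DecidableEq α] {E : Finset α} {r : Finset α → ℤ} {j k : α}

lemma iff_of_mem (hjk : j ≠ k) (hj : j ∈ E) (hk : k ∈ E) :
    Prickly E r j k ↔
      r {j} = 2 ∧ r {k} = 2 ∧ r {j, k} = 3 ∧ r {j, k} + r (E \ {j, k}) - r E = 2 ∧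
      r (E \ {k}) = r (E \ {j, k}) + 1 ∧ r (E \ {j}) = r (E \ {j, k}) + 1 := by
  simp only [Prickly, sdiff_pair_union_left hjk hj, sdiff_pair_union_right hjk hk, hjk, hj, hk,
    ne_eq, not_false_eq_true, true_and]

end Prickly

section dualRank

variable {α : Type*} [DecidableEq α] {E Y : Finset α} {r : Finset α → ℤ} {j k : α}

lemma dualRank_singleton (j : α) : dualRank E r {j} = r {j} + r (E \ {j}) - r E := by
  simp [dualRank]

lemma dualRank_pair (hjk : j ≠ k) :
    dualRank E r {j, k} = r {j} + r {k} + r (E \ {j, k}) - r E := by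
  rw [dualRank, sum_pair hjk]

lemma dualRank_sdiff (hY : Y ⊆ E) :
    dualRank E r (E \ Y) = (∑ e ∈ E, r {e}) - (∑ e ∈ Y, r {e}) + r Y - r E := by
  rw [dualRank, Finset.sdiff_sdiff_eq_self hY, sum_sdiff_eq_sub hY]

lemma dualRank_self (hr0 : r ∅ = 0) : dualRank E r E = (∑ e ∈ E, r {e}) - r E := by
  simp [dualRank, hr0]

lemma dualRank_add_dualRank_sdiff_sub (hr0 : r ∅ = 0) (hY : Y ⊆ E) :
    dualRank E r Y + dualRank E r (E \ Y) - dualRank E r E = r Y + r (E \ Y) - r E := by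
  rw [dualRank_sdiff hY, dualRank_self hr0, dualRank]
  ring

lemma dualRank_sdiff_singleton (hjk : j ≠ k) (hj : j ∈ E) (hk : k ∈ E) :
    dualRank E r (E \ {k}) = dualRank E r (E \ {j, k}) + (r {j} + r {k} - r {j, k}) := by
  rw [dualRank_sdiff (singleton_subset_iff.mpr hk),
    dualRank_sdiff (insert_subset hj (singleton_subset_iff.mpr hk)), sum_pair hjk,
    sum_singleton]
  ring

end dualRank

theorem prickly_iff_prickly_dual_general {α : Type*} [DecidableEq α]
    (E : Finset α) (r : Finset α → ℤ)
    (hr0 : r ∅ = 0)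
    (hmono : ∀ X Y : Finset α, X ⊆ Y → Y ⊆ E → r X ≤ r Y)
    (h2 : ∀ e ∈ E, r {e} ≤ 2)
    (j k : α) :
    Prickly E r j k ↔ Prickly E (dualRank E r) j k := by
  by_cases hE : j ≠ k ∧ j ∈ E ∧ k ∈ E
  swap
  · simp only [Prickly]
    tauto
  obtain ⟨hjk, hj, hk⟩ := hE
  have hZ : ({j, k} : Finset α) ⊆ E := insert_subset hj (singleton_subset_iff.mpr hk)
  have hmono_j := hmono (E \ {j}) E sdiff_subset subset_rfl
  have hmono_k := hmono (E \ {k}) E sdiff_subset subset_rfl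
  have h2j := h2 j hj
  have h2k := h2 k hk
  rw [Prickly.iff_of_mem hjk hj hk, Prickly.iff_of_mem hjk hj hk,
    dualRank_add_dualRank_sdiff_sub hr0 hZ, dualRank_singleton, dualRank_singleton,
    dualRank_pair hjk, dualRank_sdiff_singleton hjk hj hk,
    dualRank_sdiff_singleton hjk.symm hk hj, pair_comm k j]
  omega

/-- A 2-element set `{j, k}` is a prickly 3-separator of a 2-polymatroid `M`
if and only if it is a prickly 3-separator of the dual `M*`. -/
theorem prickly_iff_prickly_dual {α : Type*} [DecidableEq α]
    (E : Finset α) (r : Finset α → ℤ)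
    (hr0 : r ∅ = 0)
    (hmono : ∀ X Y : Finset α, X ⊆ Y → Y ⊆ E → r X ≤ r Y)
    (hsubmod : ∀ X Y : Finset α, X ⊆ E → Y ⊆ E →
      r (X ∪ Y) + r (X ∩ Y) ≤ r X + r Y)
    (h2 : ∀ e ∈ E, r {e} ≤ 2)
    (j k : α) :
    Prickly E r j k ↔ Prickly E (dualRank E r) j k :=
  prickly_iff_prickly_dual_general E r hr0 hmono h2 j k
end

section
/- Let {j, k} be a prickly 3-separator in a 2-polymatroid P. Then (P↓k) \ j = P \ {j, k} and (P↓k)/j = P/{j, k}; that is, for all X ⊆ E − {j, k}, r_{P↓k \ j}(X) = r(X) and r_{P↓k / j}(X) = r(X ∪ {j, k}) − 3. -/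
/-- The rank function of the compression `P↓x` of a 2-polymatroid `(E, r)`. -/
def downRank {α : Type*} [DecidableEq α] (r : Finset α → ℤ) (x : α)
    (X : Finset α) : ℤ :=
  if r {x} = 0 ∨ r X < r (X ∪ {x}) then r X else r X - 1

/-!
Since `k` is not spanned by `E \ {j, k}`, submodularity shows it is spanned by no subset `X` of
it, so compression by `k` does not change the rank of `X`. For the contraction, `r {j} < r {j, k}`
gives `r_{P↓k}({j}) = 2`, while `X ∪ {j}` is raised by at most `r {j, k} - r {j} = 1` on adding
`k`, so `r_{P↓k}(X ∪ {j}) = r (X ∪ {j, k}) - 1` whether or not `k` raises it.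
-/

section Compression

variable {α : Type*} [DecidableEq α] {E : Finset α} {r : Finset α → ℤ}

theorem downRank_eq_of_lt {x : α} {X : Finset α} (h : r X < r (X ∪ {x})) :
    downRank r x X = r X := by
  rw [downRank, if_pos (Or.inr h)]

theorem downRank_eq_rank_union_sub_one {x : α} {X : Finset α} (hx : r {x} ≠ 0)
    (hle : r X ≤ r (X ∪ {x})) (hle' : r (X ∪ {x}) ≤ r X + 1) :
    downRank r x X = r (X ∪ {x}) - 1 := by
  unfold downRank
  split_ifs with h <;> omega

variable (hsubmod : ∀ X Y : Finset α, X ⊆ E → Y ⊆ E → r (X ∪ Y) + r (X ∩ Y) ≤ r X + r Y)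
include hsubmod

theorem rank_lt_union_singleton_of_subset {x : α} {X D : Finset α} (hXD : X ⊆ D) (hxD : x ∉ D)
    (hDE : D ⊆ E) (hxE : x ∈ E) (hD : r D < r (D ∪ {x})) : r X < r (X ∪ {x}) := by
  have hunion : (X ∪ {x}) ∪ D = D ∪ {x} := by
    rw [Finset.union_right_comm, Finset.union_eq_right.mpr hXD]
  have hinter : (X ∪ {x}) ∩ D = X := by
    rw [Finset.union_inter_distrib_right, Finset.inter_eq_left.mpr hXD,
      Finset.singleton_inter_of_notMem hxD, Finset.union_empty]
  have := hsubmod (X ∪ {x}) D (Finset.union_subset (hXD.trans hDE) (by simpa)) hDE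
  rw [hunion, hinter] at this
  omega

theorem rank_union_singleton_add_le {j k : α} {Y : Finset α} (hYE : Y ⊆ E) (hjE : j ∈ E)
    (hkE : k ∈ E) (hjY : j ∈ Y) (hkY : k ∉ Y) :
    r (Y ∪ {k}) + r {j} ≤ r Y + r {j, k} := by
  have hunion : Y ∪ {j, k} = Y ∪ {k} := by
    rw [Finset.insert_eq, ← Finset.union_assoc,
      Finset.union_eq_left.mpr (Finset.singleton_subset_iff.mpr hjY)]
  have hinter : Y ∩ {j, k} = {j} := by
    ext x
    simp only [Finset.mem_inter, Finset.mem_insert, Finset.mem_singleton]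
    constructor
    · rintro ⟨hxY, rfl | rfl⟩
      · rfl
      · exact absurd hxY hkY
    · rintro rfl
      exact ⟨hjY, Or.inl rfl⟩
  have := hsubmod Y {j, k} hYE (by simp [Finset.insert_subset_iff, hjE, hkE])
  rwa [hunion, hinter] at this

end Compression

theorem down_del_con_of_prickly_general {α : Type*} [DecidableEq α]
    (E : Finset α) (r : Finset α → ℤ)
    (hmono : ∀ X Y : Finset α, X ⊆ Y → Y ⊆ E → r X ≤ r Y)
    (hsubmod : ∀ X Y : Finset α, X ⊆ E → Y ⊆ E →
      r (X ∪ Y) + r (X ∩ Y) ≤ r X + r Y)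
    (j k : α) (hjE : j ∈ E) (hkE : k ∈ E)
    (hrj : r {j} = 2) (hrk : r {k} = 2) (hrjk : r ({j, k} : Finset α) = 3)
    (hguts_k : r ((E \ {j, k}) ∪ {k}) = r (E \ {j, k}) + 1) :
    ∀ X : Finset α, X ⊆ E \ {j, k} →
      downRank r k X = r X ∧
      downRank r k (X ∪ {j}) - downRank r k {j} = r (X ∪ {j, k}) - 3 := by
  intro X hX
  have hXE : X ⊆ E := hX.trans Finset.sdiff_subset
  have hkX : k ∉ X := fun h => by simpa using hX h
  have hjk : j ≠ k := by
    rintro rfl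
    simp [hrj] at hrjk
  refine ⟨downRank_eq_of_lt (rank_lt_union_singleton_of_subset hsubmod hX (by simp)
    Finset.sdiff_subset hkE (by omega)), ?_⟩
  have hXjk : X ∪ {j} ∪ {k} = X ∪ {j, k} := by
    rw [Finset.union_assoc, ← Finset.insert_eq]
  have hXjkE : X ∪ {j} ∪ {k} ⊆ E :=
    Finset.union_subset (Finset.union_subset hXE (by simpa)) (by simpa)
  have hj : downRank r k {j} = 2 := by
    rw [downRank_eq_of_lt (by rw [← Finset.insert_eq]; omega), hrj]
  have hXj : downRank r k (X ∪ {j}) = r (X ∪ {j, k}) - 1 := by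
    have hlower := hmono _ _ Finset.subset_union_left hXjkE
    have hupper := rank_union_singleton_add_le hsubmod (Finset.union_subset_left hXjkE) hjE hkE
      (by simp) (by simp [hkX, hjk.symm])
    rw [downRank_eq_rank_union_sub_one (by omega) hlower (by omega), hXjk]
  omega

/-- Let `{j, k}` be a prickly 3-separator of a 2-polymatroid `P`. Then
`(P↓k) \ j = P \ {j, k}` and `(P↓k)/j = P/{j, k}`: for all `X ⊆ E \ {j, k}`,
`r_{P↓k \ j}(X) = r(X)` and `r_{P↓k / j}(X) = r(X ∪ {j, k}) - 3`. -/
theorem down_del_con_of_prickly {α : Type*} [DecidableEq α]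
    (E : Finset α) (r : Finset α → ℤ)
    (hr0 : r ∅ = 0)
    (hmono : ∀ X Y : Finset α, X ⊆ Y → Y ⊆ E → r X ≤ r Y)
    (hsubmod : ∀ X Y : Finset α, X ⊆ E → Y ⊆ E →
      r (X ∪ Y) + r (X ∩ Y) ≤ r X + r Y)
    (h2 : ∀ e ∈ E, r {e} ≤ 2)
    (j k : α) (hjE : j ∈ E) (hkE : k ∈ E) (hjk : j ≠ k)
    (hrj : r {j} = 2) (hrk : r {k} = 2) (hrjk : r ({j, k} : Finset α) = 3)
    (hlam : r ({j, k} : Finset α) + r (E \ {j, k}) - r E = 2)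
    (hguts_j : r ((E \ {j, k}) ∪ {j}) = r (E \ {j, k}) + 1)
    (hguts_k : r ((E \ {j, k}) ∪ {k}) = r (E \ {j, k}) + 1) :
    ∀ X : Finset α, X ⊆ E \ {j, k} →
      downRank r k X = r X ∧
      downRank r k (X ∪ {j}) - downRank r k {j} = r (X ∪ {j, k}) - 3 :=
  down_del_con_of_prickly_general E r hmono hsubmod j k hjE hkE hrj hrk hrjk hguts_k
end
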